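/- Let μ, ν ∈ 𝓜 with μ(ℝ) ≤ ν(ℝ), and let S^ν(μ) be the generalized shadow measure. Then for every θ ∈ 𝒯_{μ,ν} and every k ∈ ℝ one has C_μ(k) ≤ C_{S^ν(μ)}(k) + c_{S^ν(μ)} ≤ C_θ(k) + c_θ, and moreover c_{S^ν(μ)} ≤ c_θ, where c_θ := sup_{k∈ℝ}(C_μ(k) − C_θ(k)). -/

import Mathlib

open MeasureTheory Set Filter

noncomputable section

/-- Total mass of a measure on ℝ, as a real number. -/
def mass (η : Measure ℝ) : ℝ := (η univ).toReal

/-- Mean (first moment) of a measure on ℝ. -/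
def mean (η : Measure ℝ) : ℝ := ∫ x, x ∂η

/-- `η ∈ 𝓜`: finite Borel measure on ℝ with finite first moment. -/
def MemM (η : Measure ℝ) : Prop := IsFiniteMeasure η ∧ Integrable (fun x => x) η

/-- Put potential `P_η(k) = ∫ (k-x)⁺ dη`. -/
def Pput (η : Measure ℝ) (k : ℝ) : ℝ := ∫ x, max (k - x) 0 ∂η

/-- Call potential `C_η(k) = ∫ (x-k)⁺ dη`. -/
def Ccall (η : Measure ℝ) (k : ℝ) : ℝ := ∫ x, max (x - k) 0 ∂η

/-- `p_{μ,ν} = sup_k (P_μ(k) - P_ν(k))`. -/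
def pconst (μ ν : Measure ℝ) : ℝ := ⨆ k : ℝ, (Pput μ k - Pput ν k)

/-- `c_{μ,ν} = sup_k (C_μ(k) - C_ν(k))`. -/
def cconst (μ ν : Measure ℝ) : ℝ := ⨆ k : ℝ, (Ccall μ k - Ccall ν k)

/-- `π ∈ Π(μ,ν)`: coupling with marginals μ and ν. -/
def IsCoupling (μ ν : Measure ℝ) (π : Measure (ℝ × ℝ)) : Prop :=
  π.fst = μ ∧ π.snd = ν

open Classical in
/-- Barycenter `π̄_x = ∫ y π_x(dy)` of the disintegration of π at x. -/
def bar (π : Measure (ℝ × ℝ)) (x : ℝ) : ℝ :=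
  if h : IsFiniteMeasure π then
    haveI := h
    ∫ y, y ∂(π.condKernel x)
  else 0

/-- Weak `L¹` transport cost `∫ |x - π̄_x| μ(dx)`. -/
def WOTcost (μ : Measure ℝ) (π : Measure (ℝ × ℝ)) : ℝ := ∫ x, |x - bar π x| ∂μ

/-- `V(μ,ν) = inf over couplings of the weak L¹ cost`. -/
def V (μ ν : Measure ℝ) : ℝ :=
  sInf {r | ∃ π, IsCoupling μ ν π ∧ r = WOTcost μ π}

/-- Martingale couplings. -/
def IsMartCoupling (μ ν : Measure ℝ) (π : Measure (ℝ × ℝ)) : Prop :=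
  IsCoupling μ ν π ∧ ∀ᵐ x ∂μ, bar π x = x

/-- Supermartingale couplings. -/
def IsSupCoupling (μ ν : Measure ℝ) (π : Measure (ℝ × ℝ)) : Prop :=
  IsCoupling μ ν π ∧ ∀ᵐ x ∂μ, bar π x ≤ x

/-- Submartingale couplings. -/
def IsSubCoupling (μ ν : Measure ℝ) (π : Measure (ℝ × ℝ)) : Prop :=
  IsCoupling μ ν π ∧ ∀ᵐ x ∂μ, x ≤ bar π x

/-- `x⁻ = inf {k : P_ν(k) + p_{μ,ν} = P_μ(k)}`. -/
def xminus (μ ν : Measure ℝ) : ℝ := sInf {k | Pput ν k + pconst μ ν = Pput μ k}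

/-- `x⁺ = sup {k : P_ν(k) + p_{μ,ν} = P_μ(k)}`. -/
def xplus (μ ν : Measure ℝ) : ℝ := sSup {k | Pput ν k + pconst μ ν = Pput μ k}

/-- Left derivative. -/
def leftD (f : ℝ → ℝ) (x : ℝ) : ℝ := derivWithin f (Iio x) x

/-- Right derivative. -/
def rightD (f : ℝ → ℝ) (x : ℝ) : ℝ := derivWithin f (Ioi x) x

/-- `η⁻ = μ|_{(-∞,x⁻)}`. -/
def etaMinus (μ ν : Measure ℝ) : Measure ℝ := μ.restrict (Iio (xminus μ ν))

/-- `η⁰ = μ|_{[x⁻,x⁺]}`. -/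
def etaZero (μ ν : Measure ℝ) : Measure ℝ := μ.restrict (Icc (xminus μ ν) (xplus μ ν))

/-- `η⁺ = μ|_{(x⁺,∞)}`. -/
def etaPlus (μ ν : Measure ℝ) : Measure ℝ := μ.restrict (Ioi (xplus μ ν))

/-- `χ⁻ = ν|_{(-∞,x⁻)} + (Δ⁻ - P_ν'(x⁻-)) δ_{x⁻}`. -/
def chiMinus (μ ν : Measure ℝ) : Measure ℝ :=
  ν.restrict (Iio (xminus μ ν)) +
    (ENNReal.ofReal (leftD (Pput μ) (xminus μ ν) - leftD (Pput ν) (xminus μ ν))) •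
      Measure.dirac (xminus μ ν)

/-- `χ⁺ = ν|_{(x⁺,∞)} + (Δ⁺ - P_ν'(x⁺+)) δ_{x⁺}`. -/
def chiPlus (μ ν : Measure ℝ) : Measure ℝ :=
  ν.restrict (Ioi (xplus μ ν)) +
    (ENNReal.ofReal (rightD (Pput μ) (xplus μ ν) - rightD (Pput ν) (xplus μ ν))) •
      Measure.dirac (xplus μ ν)

/-- `χ⁰ = ν - χ⁻ - χ⁺`. -/
def chiZero (μ ν : Measure ℝ) : Measure ℝ := ν - chiMinus μ ν - chiPlus μ ν

/-- `Π*(μ,ν)`: couplings of the form sub + martingale + super on the decomposition. -/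
def PiStar (μ ν : Measure ℝ) : Set (Measure (ℝ × ℝ)) :=
  {π | IsCoupling μ ν π ∧
    ∃ πm π0 πp : Measure (ℝ × ℝ),
      π = πm + π0 + πp ∧
      IsSubCoupling (etaMinus μ ν) (chiMinus μ ν) πm ∧
      IsMartCoupling (etaZero μ ν) (chiZero μ ν) π0 ∧
      IsSupCoupling (etaPlus μ ν) (chiPlus μ ν) πp}

/-- Convex order `η ≤_c χ`. -/
def CxOrder (η χ : Measure ℝ) : Prop :=
  ∀ f : ℝ → ℝ, ConvexOn ℝ univ f → Integrable f η → Integrable f χ →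
    ∫ x, f x ∂η ≤ ∫ x, f x ∂χ

/-- Convex decreasing order `η ≤_cd χ`. -/
def CdOrder (η χ : Measure ℝ) : Prop :=
  ∀ f : ℝ → ℝ, ConvexOn ℝ univ f → Antitone f → Integrable f η → Integrable f χ →
    ∫ x, f x ∂η ≤ ∫ x, f x ∂χ

/-- Convex increasing order `η ≤_ci χ`. -/
def CiOrder (η χ : Measure ℝ) : Prop :=
  ∀ f : ℝ → ℝ, ConvexOn ℝ univ f → Monotone f → Integrable f η → Integrable f χ →
    ∫ x, f x ∂η ≤ ∫ x, f x ∂χ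

/-- Convex hull (largest convex minorant) of a function. -/
def convHullFn (f : ℝ → ℝ) : ℝ → ℝ :=
  fun x => sSup {v : ℝ | ∃ g : ℝ → ℝ, ConvexOn ℝ univ g ∧ (∀ y, g y ≤ f y) ∧ v = g x}

/-- `S` is the generalized shadow measure of μ in ν, characterized by its put potential. -/
def IsShadow (μ ν S : Measure ℝ) : Prop :=
  MemM S ∧
    ∀ k, Pput S k = Pput ν k - convHullFn (fun t => Pput ν t - Pput μ t) k - pconst μ ν

/-- `𝒯_{μ,ν}`: possible target laws of μ in ν. -/
def TargetSet (μ ν : Measure ℝ) : Set (Measure ℝ) :=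
  {θ | MemM θ ∧ mass θ = mass μ ∧ θ ≤ ν}



section Helpers

open MeasureTheory

lemma intPut {η : Measure ℝ} (h : MemM η) (k : ℝ) :
    Integrable (fun x => max (k - x) 0) η := by
  haveI := h.1
  have hg : Integrable (fun x : ℝ => |k| + |x|) η := (integrable_const _).add h.2.abs
  refine hg.mono' ?_ ?_
  · exact ((continuous_const.sub continuous_id').max continuous_const).aestronglyMeasurable
  · filter_upwards with x
    rw [Real.norm_eq_abs, abs_of_nonneg (le_max_right _ _)]
    refine max_le ?_ (by positivity)
    have : |k - x| ≤ |k| + |x| := abs_sub k x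
    have := le_abs_self (k - x)
    linarith

lemma intCall {η : Measure ℝ} (h : MemM η) (k : ℝ) :
    Integrable (fun x => max (x - k) 0) η := by
  haveI := h.1
  have hg : Integrable (fun x : ℝ => |x| + |k|) η := h.2.abs.add (integrable_const _)
  refine hg.mono' ?_ ?_
  · exact ((continuous_id'.sub continuous_const).max continuous_const).aestronglyMeasurable
  · filter_upwards with x
    rw [Real.norm_eq_abs, abs_of_nonneg (le_max_right _ _)]
    refine max_le ?_ (by positivity)
    have : |x - k| ≤ |x| + |k| := abs_sub x k
    have := le_abs_self (x - k)
    linarith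

lemma parity {η : Measure ℝ} (h : MemM η) (k : ℝ) :
    Ccall η k - Pput η k = mean η - k * mass η := by
  haveI := h.1
  have h1 := intCall h k
  have h2 := intPut h k
  have e1 : Ccall η k - Pput η k = ∫ x, (max (x - k) 0 - max (k - x) 0) ∂η :=
    (integral_sub h1 h2).symm
  have e2 : ∀ x : ℝ, max (x - k) 0 - max (k - x) 0 = x - k := by
    intro x
    rcases le_total x k with hx | hx
    · rw [max_eq_right (by linarith), max_eq_left (by linarith)]; ring
    · rw [max_eq_left (by linarith), max_eq_right (by linarith)]; ring
  rw [e1]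
  simp_rw [e2]
  rw [integral_sub h.2 (integrable_const k), integral_const]
  simp [mean, mass, smul_eq_mul, mul_comm]
  exact Or.inl rfl

lemma pput_nonneg (η : Measure ℝ) (k : ℝ) : 0 ≤ Pput η k :=
  integral_nonneg fun _ => le_max_right _ _

lemma ccall_nonneg (η : Measure ℝ) (k : ℝ) : 0 ≤ Ccall η k :=
  integral_nonneg fun _ => le_max_right _ _

lemma pput_mono {η : Measure ℝ} (h : MemM η) {k k' : ℝ} (hk : k ≤ k') :
    Pput η k ≤ Pput η k' :=
  integral_mono (intPut h k) (intPut h k') fun x =>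
    max_le_max (by linarith) le_rfl

lemma ccall_anti {η : Measure ℝ} (h : MemM η) {k k' : ℝ} (hk : k ≤ k') :
    Ccall η k' ≤ Ccall η k :=
  integral_mono (intCall h k') (intCall h k) fun x =>
    max_le_max (by linarith) le_rfl

lemma put_diff_le {η χ : Measure ℝ} (hη : MemM η) (hχ : MemM χ)
    (hm : mass η ≤ mass χ) (k : ℝ) :
    Pput η k - Pput χ k ≤ max (Pput η 0) (Ccall η 0 + mean χ - mean η) := by
  rcases le_total k 0 with hk | hk
  · have h1 : Pput η k ≤ Pput η 0 := pput_mono hη hk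
    have h2 := pput_nonneg χ k
    exact le_trans (by linarith) (le_max_left _ _)
  · have p1 := parity hη k
    have p2 := parity hχ k
    have h1 : Ccall η k ≤ Ccall η 0 := ccall_anti hη hk
    have h2 := ccall_nonneg χ k
    have h3 : k * mass η ≤ k * mass χ := mul_le_mul_of_nonneg_left hm hk
    exact le_trans (by linarith) (le_max_right _ _)

lemma bddAbove_put_diff {η χ : Measure ℝ} (hη : MemM η) (hχ : MemM χ)
    (hm : mass η ≤ mass χ) :
    BddAbove (Set.range fun k => Pput η k - Pput χ k) := by
  refine ⟨max (Pput η 0) (Ccall η 0 + mean χ - mean η), ?_⟩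
  rintro v ⟨k, rfl⟩
  exact put_diff_le hη hχ hm k

lemma iSup_add_const (f : ℝ → ℝ) (c : ℝ) (hb : BddAbove (Set.range f)) :
    (⨆ k, (f k + c)) = (⨆ k, f k) + c := by
  obtain ⟨u, hu⟩ := hb
  have hb' : BddAbove (Set.range fun k => f k + c) := by
    refine ⟨u + c, ?_⟩
    rintro v ⟨k, rfl⟩
    exact add_le_add_left (hu ⟨k, rfl⟩) c
  refine le_antisymm (ciSup_le fun k => add_le_add_left (le_ciSup ⟨u, hu⟩ k) c) ?_
  have : (⨆ k, f k) ≤ (⨆ k, (f k + c)) - c := by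
    refine ciSup_le fun k => ?_
    have := le_ciSup hb' k
    linarith
  linarith

lemma hull_le {f : ℝ → ℝ} (g₀ : ℝ → ℝ) (hg₀ : ConvexOn ℝ Set.univ g₀)
    (hle₀ : ∀ y, g₀ y ≤ f y) (x : ℝ) : convHullFn f x ≤ f x := by
  refine csSup_le ⟨g₀ x, g₀, hg₀, hle₀, rfl⟩ ?_
  rintro v ⟨g, _, hgle, rfl⟩
  exact hgle x

lemma le_hull {f g : ℝ → ℝ} (hg : ConvexOn ℝ Set.univ g) (hle : ∀ y, g y ≤ f y) (x : ℝ) :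
    g x ≤ convHullFn f x := by
  refine le_csSup ⟨f x, ?_⟩ ⟨g, hg, hle, rfl⟩
  rintro v ⟨g', _, h', rfl⟩
  exact h' x

lemma convexOn_affine (a b : ℝ) : ConvexOn ℝ Set.univ (fun x => a * x + b) := by
  refine ⟨convex_univ, fun x _ y _ s t hs ht hst => ?_⟩
  simp only [smul_eq_mul]
  have : a * (s * x + t * y) + b = s * (a * x + b) + t * (a * y + b) := by
    linear_combination b * hst.symm
  linarith [this.le]

lemma convexOn_add_const {f : ℝ → ℝ} (hf : ConvexOn ℝ Set.univ f) (c : ℝ) :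
    ConvexOn ℝ Set.univ (fun x => f x + c) := by
  refine ⟨convex_univ, fun x hx y hy s t hs ht hst => ?_⟩
  have h := hf.2 hx hy hs ht hst
  simp only [smul_eq_mul] at h ⊢
  have hc : s * c + t * c = c := by linear_combination c * hst
  linarith

lemma pput_convexOn {ρ : Measure ℝ} (hint : ∀ k, Integrable (fun x => max (k - x) 0) ρ) :
    ConvexOn ℝ Set.univ (Pput ρ) := by
  refine ⟨convex_univ, fun a _ b _ s t hs ht hst => ?_⟩
  simp only [smul_eq_mul]
  have hpt : ∀ x : ℝ, max (s * a + t * b - x) 0 ≤ s * max (a - x) 0 + t * max (b - x) 0 := by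
    intro x
    have h1 : s * a + t * b - x = s * (a - x) + t * (b - x) := by
      linear_combination (-x) * hst.symm
    have h2 : s * (a - x) ≤ s * max (a - x) 0 := mul_le_mul_of_nonneg_left (le_max_left _ _) hs
    have h3 : t * (b - x) ≤ t * max (b - x) 0 := mul_le_mul_of_nonneg_left (le_max_left _ _) ht
    have h4 : 0 ≤ s * max (a - x) 0 + t * max (b - x) 0 := by positivity
    rw [h1]
    exact max_le (by linarith) h4
  calc Pput ρ (s * a + t * b)
      ≤ ∫ x, (s * max (a - x) 0 + t * max (b - x) 0) ∂ρ :=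
        integral_mono (hint _) (((hint a).const_mul s).add ((hint b).const_mul t)) hpt
    _ = s * Pput ρ a + t * Pput ρ b := by
        rw [integral_add ((hint a).const_mul s) ((hint b).const_mul t),
          integral_const_mul, integral_const_mul]
        rfl

lemma ccall_tendsto_zero {η : Measure ℝ} (h : MemM η) :
    Filter.Tendsto (fun k => Ccall η k) Filter.atTop (nhds 0) := by
  haveI := h.1
  have h0 : (0 : ℝ) = ∫ x, (0 : ℝ) ∂η := by simp
  rw [h0]
  refine MeasureTheory.tendsto_integral_filter_of_dominated_convergence (fun x => |x|)
    ?_ ?_ h.2.abs ?_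
  · filter_upwards with k
    exact ((continuous_id'.sub continuous_const).max continuous_const).aestronglyMeasurable
  · filter_upwards [Filter.eventually_ge_atTop (0 : ℝ)] with k hk
    filter_upwards with x
    rw [Real.norm_eq_abs, abs_of_nonneg (le_max_right _ _)]
    refine max_le ?_ (abs_nonneg x)
    have := le_abs_self x
    linarith
  · filter_upwards with x
    refine Filter.Tendsto.congr' ?_ tendsto_const_nhds
    filter_upwards [Filter.eventually_ge_atTop x] with k hk
    rw [max_eq_right (by linarith)]

end Helpers

theorem stmt_14 (μ ν S : Measure ℝ) (hμ : MemM μ) (hν : MemM ν)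
    (hmass : mass μ ≤ mass ν) (hS : IsShadow μ ν S) :
    ∀ θ ∈ TargetSet μ ν,
      (∀ k, Ccall μ k ≤ Ccall S k + cconst μ S ∧
        Ccall S k + cconst μ S ≤ Ccall θ k + cconst μ θ) ∧
      cconst μ S ≤ cconst μ θ := by
  intro θ hθ
  obtain ⟨hθM, hθmass, hθle⟩ := hθ
  haveI := hμ.1; haveI := hν.1; haveI := hS.1.1; haveI := hθM.1
  have hmθ : mass μ ≤ mass θ := le_of_eq hθmass.symm
  -- basic facts about pconst μ ν
  have hbddν : BddAbove (Set.range fun k => Pput μ k - Pput ν k) :=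
    bddAbove_put_diff hμ hν hmass
  have hple : ∀ k, Pput μ k - Pput ν k ≤ pconst μ ν := fun k => le_ciSup hbddν k
  have hmp : ∀ y, -pconst μ ν ≤ (fun t => Pput ν t - Pput μ t) y := by
    intro y; have := hple y; simp only; linarith
  have hHle : ∀ x, convHullFn (fun t => Pput ν t - Pput μ t) x ≤ Pput ν x - Pput μ x :=
    fun x => hull_le (fun _ => -pconst μ ν) (convexOn_const _ convex_univ) hmp x
  have hHgec : ∀ x, -pconst μ ν ≤ convHullFn (fun t => Pput ν t - Pput μ t) x :=
    fun x => le_hull (convexOn_const _ convex_univ) hmp x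
  -- the affine minorant g₀
  set c' := max (Ccall μ 0) (Pput μ 0 + mean μ - mean ν) with hc'def
  have hc' : ∀ k, Ccall μ k - Ccall ν k ≤ c' := by
    intro k
    rcases le_total k 0 with hk | hk
    · have p1 := parity hμ k
      have p2 := parity hν k
      have h1 : Pput μ k ≤ Pput μ 0 := pput_mono hμ hk
      have h2 := pput_nonneg ν k
      have h3 : k * mass ν ≤ k * mass μ := mul_le_mul_of_nonpos_left hmass hk
      exact le_trans (by linarith) (le_max_right _ _)
    · have h1 : Ccall μ k ≤ Ccall μ 0 := ccall_anti hμ hk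
      have h2 := ccall_nonneg ν k
      exact le_trans (by linarith) (le_max_left _ _)
  have hg₀min : ∀ y, (mass ν - mass μ) * y + (-(mean ν - mean μ) - c') ≤
      (fun t => Pput ν t - Pput μ t) y := by
    intro y
    have p1 := parity hμ y
    have p2 := parity hν y
    have h1 := hc' y
    have hring : (mass ν - mass μ) * y = y * mass ν - y * mass μ := by ring
    simp only
    linarith
  have hg₀H : ∀ x, (mass ν - mass μ) * x + (-(mean ν - mean μ) - c') ≤
      convHullFn (fun t => Pput ν t - Pput μ t) x :=
    fun x => le_hull (convexOn_affine _ _) hg₀min x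
  -- mass S = mass μ
  have hub : ∀ k, 0 ≤ k → k * mass S - k * mass μ ≤
      mean S - mean μ + Ccall ν 0 + c' - pconst μ ν := by
    intro k hk
    have p1 := parity hμ k
    have p2 := parity hS.1 k
    have p3 := parity hν k
    have p4 := hS.2 k
    have h5 := hg₀H k
    have h6 := ccall_nonneg S k
    have h7 : Ccall ν k ≤ Ccall ν 0 := ccall_anti hν hk
    have h8 := ccall_nonneg μ k
    have hring : (mass ν - mass μ) * k = k * mass ν - k * mass μ := by ring
    linarith
  have hlb : ∀ k, 0 ≤ k →
      -(pconst μ ν + Ccall S 0 - mean S + mean μ) ≤ k * mass S - k * mass μ := by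
    intro k hk
    have p1 := parity hμ k
    have p2 := parity hS.1 k
    have p4 := hS.2 k
    have h5 := hHle k
    have h6 : Ccall S k ≤ Ccall S 0 := ccall_anti hS.1 hk
    have h8 := ccall_nonneg μ k
    linarith
  have hmassS : mass S = mass μ := by
    by_contra hne
    rcases lt_or_gt_of_ne (sub_ne_zero.mpr hne) with hd | hd
    · set Bl := pconst μ ν + Ccall S 0 - mean S + mean μ with hBl
      have hBl0 : -Bl ≤ 0 := by have := hlb 0 le_rfl; simpa using this
      set k := (-Bl - 1) / (mass S - mass μ) with hkdef
      have hk0 : 0 ≤ k := div_nonneg_of_nonpos (by linarith) hd.le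
      have hkd : k * (mass S - mass μ) = -Bl - 1 := by
        rw [hkdef, div_mul_cancel₀]
        exact sub_ne_zero.mpr hne
      have := hlb k hk0
      nlinarith
    · set Bu := mean S - mean μ + Ccall ν 0 + c' - pconst μ ν with hBu
      have hBu0 : 0 ≤ Bu := by have := hub 0 le_rfl; simpa using this
      set k := (Bu + 1) / (mass S - mass μ) with hkdef
      have hk0 : 0 ≤ k := div_nonneg (by linarith) (by linarith)
      have hkd : k * (mass S - mass μ) = Bu + 1 := by
        rw [hkdef, div_mul_cancel₀]
        exact sub_ne_zero.mpr hne
      have := hub k hk0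
      nlinarith
  -- expression for Ccall μ k - Ccall S k
  have hCSub : ∀ k, Ccall μ k - Ccall S k =
      (convHullFn (fun t => Pput ν t - Pput μ t) k - (Pput ν k - Pput μ k)) +
        pconst μ ν + (mean μ - mean S) := by
    intro k
    have p1 := parity hμ k
    have p2 := parity hS.1 k
    rw [hmassS] at p2
    have p4 := hS.2 k
    linarith
  have hbddS : BddAbove (Set.range fun k => Ccall μ k - Ccall S k) := by
    refine ⟨pconst μ ν + (mean μ - mean S), ?_⟩
    rintro v ⟨k, rfl⟩
    have := hHle k
    have := hCSub k
    simp only at *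
    linarith
  -- value of cconst μ S
  have hcS : cconst μ S = pconst μ ν + (mean μ - mean S) := by
    refine le_antisymm (ciSup_le fun k => ?_) (le_of_forall_pos_le_add fun ε hε => ?_)
    · have := hHle k
      have := hCSub k
      linarith
    · have hlt : pconst μ ν - ε < ⨆ k, (Pput μ k - Pput ν k) := by
        have : (⨆ k, (Pput μ k - Pput ν k)) = pconst μ ν := rfl
        rw [this]; linarith
      obtain ⟨k, hk⟩ := exists_lt_of_lt_ciSup hlt
      have h1 := hHgec k
      have h2 : Ccall μ k - Ccall S k ≤ cconst μ S := le_ciSup hbddS k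
      have h3 := hCSub k
      linarith
  -- value of cconst μ θ
  have hbddθ : BddAbove (Set.range fun k => Pput μ k - Pput θ k) :=
    bddAbove_put_diff hμ hθM hmθ
  have hpθle : ∀ k, Pput μ k - Pput θ k ≤ pconst μ θ := fun k => le_ciSup hbddθ k
  have hCθk : ∀ k, Ccall μ k - Ccall θ k = (Pput μ k - Pput θ k) + (mean μ - mean θ) := by
    intro k
    have p1 := parity hμ k
    have p2 := parity hθM k
    rw [hθmass] at p2
    linarith
  have hcθ : cconst μ θ = pconst μ θ + (mean μ - mean θ) := by
    have e1 : cconst μ θ = ⨆ k, ((Pput μ k - Pput θ k) + (mean μ - mean θ)) :=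
      iSup_congr hCθk
    rw [e1, iSup_add_const _ _ hbddθ]
    rfl
  -- decomposition ν = (ν - θ) + θ and convexity of the minorant
  haveI : IsFiniteMeasure (ν - θ) := isFiniteMeasure_of_le ν Measure.sub_le
  have hintρ : ∀ k, Integrable (fun x => max (k - x) 0) (ν - θ) :=
    fun k => (intPut hν k).mono_measure Measure.sub_le
  have hsplit : ∀ k, Pput ν k = Pput θ k + Pput (ν - θ) k := by
    intro k
    have e : (ν - θ) + θ = ν := Measure.sub_add_cancel_of_le hθle
    have : Pput ν k = ∫ x, max (k - x) 0 ∂((ν - θ) + θ) := by rw [e]; rfl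
    rw [this, integral_add_measure (hintρ k) (intPut hθM k)]
    unfold Pput; ring
  have hgθmin : ∀ y, Pput (ν - θ) y + -pconst μ θ ≤ (fun t => Pput ν t - Pput μ t) y := by
    intro y
    have := hpθle y
    have := hsplit y
    simp only
    linarith
  have hgθH : ∀ x, Pput (ν - θ) x + -pconst μ θ ≤
      convHullFn (fun t => Pput ν t - Pput μ t) x :=
    fun x => le_hull (convexOn_add_const (pput_convexOn hintρ) _) hgθmin x
  -- the key pointwise inequality
  have hkey : ∀ k, Pput S k + pconst μ ν ≤ Pput θ k + pconst μ θ := by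
    intro k
    have h1 := hgθH k
    have h2 := hsplit k
    have h3 := hS.2 k
    linarith
  -- part (b)
  have hb : ∀ k, Ccall S k + cconst μ S ≤ Ccall θ k + cconst μ θ := by
    intro k
    rw [hcS, hcθ]
    have p2 := parity hS.1 k
    rw [hmassS] at p2
    have p3 := parity hθM k
    rw [hθmass] at p3
    have := hkey k
    linarith
  refine ⟨fun k => ⟨?_, hb k⟩, ?_⟩
  · -- part (a)
    rw [hcS]
    have := hHle k
    have := hCSub k
    linarith
  · -- part (c)
    have hθ0 := ccall_tendsto_zero hθM
    have hlim : Filter.Tendsto (fun k => Ccall θ k + cconst μ θ) Filter.atTop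
        (nhds (0 + cconst μ θ)) := hθ0.add_const _
    rw [zero_add] at hlim
    refine ge_of_tendsto hlim (Filter.Eventually.of_forall fun k => ?_)
    have := hb k
    have := ccall_nonneg S k
    linarith

end
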